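/- arXiv:2603.28185 — 3 statements merged into one kernel-verified Lean document; each statement's English description precedes it below -/
import Mathlib

section
/- Let G be any finitely generated group and let F be a finite subset of G consisting of a generating set, the inverses of its elements, and the identity e. Then there exists a random process (a Borel probability measure on sequences (f_{w_n})_{n≥1} with values in F) such that, setting g_0 = e and g_n = f_{w_n}·g_{n−1} for n ≥ 1, one has for every n ≥ 1 and every g ∈ G: P(g_n = g) ≤ 1/#B_{⌊n/4⌋}^G(e). -/
open Filter Set Topology MeasureTheory
open scoped ENNReal

namespace NilpotentCritReg

variable {G : Type*} [Group G]

/-- The ball of radius `n` in `G` with respect to the finite set `S`: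
elements expressible as products of at most `n` elements of `S ∪ S⁻¹`. -/
def wordBall (S : Finset G) (n : ℕ) : Set G :=
  {g | ∃ l : List G, l.length ≤ n ∧ (∀ x ∈ l, x ∈ S ∨ x⁻¹ ∈ S) ∧ l.prod = g}

/-- The ball of radius `n` in the Schreier graph of the left coset space `G/H`:
the image of the word ball in `G ⧸ H`. -/
def schreierBall (S : Finset G) (H : Subgroup G) (n : ℕ) : Set (G ⧸ H) :=
  (fun g => (QuotientGroup.mk g : G ⧸ H)) '' wordBall S n

/-- `gr(G/H) = d`: the growth rate of the Schreier graph `G/H` equals `d`. -/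
def HasSchreierGrowth (S : Finset G) (H : Subgroup G) (d : ℝ) : Prop :=
  Tendsto (fun n : ℕ => Real.log ((schreierBall S H n).ncard) / Real.log n)
    atTop (𝓝 d)

/-- `gr_G(H) = d`: the relative growth of the subgroup `H` in `G` equals `d`. -/
def HasRelativeGrowth (S : Finset G) (H : Subgroup G) (d : ℝ) : Prop :=
  Tendsto (fun n : ℕ => Real.log ((wordBall S n ∩ (H : Set G)).ncard) / Real.log n)
    atTop (𝓝 d)

/-- `K` is a stabilizer subgroup of the central element `c`. -/
def IsStabilizerSubgroup (c : G) (K : Subgroup G) : Prop :=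
  c ∈ K ∧
  (∃ H : Subgroup G, H ≤ K ∧
      (∃ ψ : ↥K →* Multiplicative ℤ, Function.Surjective ψ ∧ ψ.ker = H.subgroupOf K) ∧
      H ⊓ Subgroup.zpowers c = ⊥) ∧
  (∃ n : ℕ, ∃ chain : Fin (n + 1) → Subgroup G,
      chain 0 = ⊤ ∧ chain (Fin.last n) = K ∧
      ∀ i : Fin n, chain i.succ ≤ chain i.castSucc ∧
        ∃ ψ : ↥(chain i.castSucc) →* Multiplicative ℤ, Function.Surjective ψ ∧
          ψ.ker = (chain i.succ).subgroupOf (chain i.castSucc))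

/-- An action of `G` on a subset `M ⊆ ℝ` by orientation-preserving bijections. -/
structure IntervalAction (G : Type*) [Group G] (M : Set ℝ) where
  toFun : G → ℝ → ℝ
  bijOn : ∀ g : G, Set.BijOn (toFun g) M M
  strictMonoOn : ∀ g : G, StrictMonoOn (toFun g) M
  map_one : Set.EqOn (toFun 1) id M
  map_mul : ∀ g h : G, ∀ x ∈ M, toFun (g * h) x = toFun g (toFun h x)

namespace IntervalAction

variable {M : Set ℝ}

/-- The action is by `C¹` diffeomorphisms (continuous positive derivative on `M`). -/
def IsC1 (φ : IntervalAction G M) : Prop :=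
  ∀ g : G, ∃ d : ℝ → ℝ, ContinuousOn d M ∧
    ∀ x ∈ M, 0 < d x ∧ HasDerivWithinAt (φ.toFun g) (d x) M x

/-- The action is by `C^{1+α}` diffeomorphisms: `C¹` with derivative `α`-Hölder on
every compact subset of `M` (for compact `M` this is global `α`-Hölder continuity). -/
def IsC1Holder (φ : IntervalAction G M) (α : ℝ) : Prop :=
  ∀ g : G, ∃ d : ℝ → ℝ, ContinuousOn d M ∧
    (∀ x ∈ M, 0 < d x ∧ HasDerivWithinAt (φ.toFun g) (d x) M x) ∧
    ∀ K : Set ℝ, K ⊆ M → IsCompact K →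
      ∃ C : ℝ, ∀ x ∈ K, ∀ y ∈ K, |d x - d y| ≤ C * |x - y| ^ α

/-- Faithfulness of an interval action. -/
def Faithful (φ : IntervalAction G M) : Prop :=
  ∀ g : G, Set.EqOn (φ.toFun g) id M → g = 1

end IntervalAction

/-- An action of `G` on the circle `S¹ = ℝ/ℤ` by orientation-preserving homeomorphisms,
encoded by lifts to `ℝ` commuting with the unit translation; the group laws hold up to
integer translations. -/
structure CircleAction (G : Type*) [Group G] where
  lift : G → ℝ → ℝ
  strictMono : ∀ g : G, StrictMono (lift g)
  surjective : ∀ g : G, Function.Surjective (lift g)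
  lift_add_one : ∀ (g : G) (x : ℝ), lift g (x + 1) = lift g x + 1
  lift_one : ∃ k : ℤ, ∀ x : ℝ, lift 1 x = x + k
  lift_mul : ∀ g h : G, ∃ k : ℤ, ∀ x : ℝ, lift (g * h) x = lift g (lift h x) + k

namespace CircleAction

/-- `g` acts as the identity on the circle. -/
def IsIdOn (φ : CircleAction G) (g : G) : Prop :=
  ∃ k : ℤ, ∀ x : ℝ, φ.lift g x = x + k

/-- Faithfulness of a circle action. -/
def Faithful (φ : CircleAction G) : Prop :=
  ∀ g : G, φ.IsIdOn g → g = 1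

/-- The circle action is by `C¹` diffeomorphisms. -/
def IsC1 (φ : CircleAction G) : Prop :=
  ∀ g : G, ∃ d : ℝ → ℝ, Continuous d ∧ ∀ x : ℝ, 0 < d x ∧ HasDerivAt (φ.lift g) (d x) x

/-- The circle action is by `C^{1+α}` diffeomorphisms. -/
def IsC1Holder (φ : CircleAction G) (α : ℝ) : Prop :=
  ∀ g : G, ∃ d : ℝ → ℝ, Continuous d ∧ (∀ x : ℝ, 0 < d x ∧ HasDerivAt (φ.lift g) (d x) x) ∧
    ∃ C : ℝ, ∀ x y : ℝ, |d x - d y| ≤ C * |x - y| ^ α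

/-- The set of lifts of fixed points of `g` on the circle. -/
def FixLift (φ : CircleAction G) (g : G) : Set ℝ :=
  {x : ℝ | ∃ k : ℤ, φ.lift g x = x + k}

/-- `J ⊆ ℝ` is (the lift of) a support interval of `g` on the circle: the closure of a
connected component of the complement of the fixed-point set. -/
def IsSupportLift (φ : CircleAction G) (g : G) (J : Set ℝ) : Prop :=
  ∃ x : ℝ, x ∉ φ.FixLift g ∧ J = closure (connectedComponentIn (φ.FixLift g)ᶜ x)

/-- `g` stabilizes the (projection to the circle of the) interval `J`. -/
def Stabilizes (φ : CircleAction G) (g : G) (J : Set ℝ) : Prop :=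
  ∃ k : ℤ, φ.lift g '' J = (fun x => x + (k : ℝ)) '' J

end CircleAction

/-- Critical regularity of a class of interval actions, as an element of `[1,∞]`. -/
noncomputable def critInterval (G : Type*) [Group G] (M : Set ℝ)
    (P : IntervalAction G M → Prop) : ℝ≥0∞ :=
  sSup (insert 1 {x : ℝ≥0∞ | ∃ α : ℝ, 0 < α ∧ α < 1 ∧ x = ENNReal.ofReal (1 + α) ∧
    ∃ φ : IntervalAction G M, P φ ∧ φ.IsC1Holder α})

/-- Critical regularity of a class of circle actions, as an element of `[1,∞]`. -/
noncomputable def critCircle (G : Type*) [Group G]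
    (P : CircleAction G → Prop) : ℝ≥0∞ :=
  sSup (insert 1 {x : ℝ≥0∞ | ∃ α : ℝ, 0 < α ∧ α < 1 ∧ x = ENNReal.ofReal (1 + α) ∧
    ∃ φ : CircleAction G, P φ ∧ φ.IsC1Holder α})

/-- The value `1 + 1/d`, with the convention that it is `+∞` when `d = 0`. -/
noncomputable def critFormula (d : ℕ) : ℝ≥0∞ :=
  if d = 0 then ⊤ else ENNReal.ofReal (1 + 1 / d)

/-- `J` is a support interval of `f` in `M`: the closure (in `M`) of a connected
component of `M ∖ Fix(f)`. -/
def IsSupportIntervalIn (f : ℝ → ℝ) (M J : Set ℝ) : Prop :=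
  ∃ x ∈ M, f x ≠ x ∧ J = M ∩ closure (connectedComponentIn {y ∈ M | f y ≠ y} x)

/-- The left-ordered partial products `g_n = ω_{n-1} ⋯ ω_1 ω_0` of a sequence. -/
def leftProd (ω : ℕ → G) : ℕ → G
  | 0 => 1
  | n + 1 => ω n * leftProd ω n

/-- `S ∪ S⁻¹ ∪ {1}` as a finite set. -/
def symmGens [DecidableEq G] (S : Finset G) : Finset G :=
  insert 1 (S ∪ S.image (·⁻¹))

instance lcs_subgroupOf_normal (G : Type*) [Group G] (j : ℕ) :
    (((⊤ : Subgroup G).lowerCentralSeries (j + 1)).subgroupOf ((⊤ : Subgroup G).lowerCentralSeries j)).Normal :=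
  Subgroup.Normal.subgroupOf inferInstance _

/-- The quotient `G_j/G_{j+1}` of consecutive terms of the lower central series
(with 0-based indexing: `lcsQuot G 0 = G/[G,G]`). -/
abbrev lcsQuot (G : Type*) [Group G] (j : ℕ) :=
  ↥((⊤ : Subgroup G).lowerCentralSeries j) ⧸
    (((⊤ : Subgroup G).lowerCentralSeries (j + 1)).subgroupOf ((⊤ : Subgroup G).lowerCentralSeries j))

/-- A group has torsion-free rank `r` if it admits a finite normal subgroup with
quotient free abelian of rank `r` (for finitely generated abelian groups this is the
usual torsion-free rank). -/
def HasTorsionFreeRank (A : Type*) [Group A] (r : ℕ) : Prop :=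
  ∃ ψ : A →* Multiplicative (Fin r → ℤ), Function.Surjective ψ ∧ Finite ψ.ker

/-- The image of `H_j = H ∩ G_j` in the quotient `G_j/G_{j+1}`. -/
def relImage (H : Subgroup G) (j : ℕ) : Subgroup (lcsQuot G j) :=
  Subgroup.map (QuotientGroup.mk' _)
    ((H ⊓ (⊤ : Subgroup G).lowerCentralSeries j).subgroupOf ((⊤ : Subgroup G).lowerCentralSeries j))

/-- The word norm of an element with respect to a finite generating set. -/
noncomputable def wordNorm {A : Type*} [Group A] (T : Finset A) (a : A) : ℕ :=
  sInf {n : ℕ | a ∈ wordBall T n}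

/-!
Cut time into blocks, block `j` occupying `[2^j - 1, 2^(j+1) - 1)`. During block `j` the
process draws, independently of the other blocks, a uniformly random element `x_j` of the
ball of radius `2^j` and spells it out as a word of length exactly `2^j` over `F` (padding
with `e`), so that the block multiplies the running product on the left by `x_j`. If `n` lies
in block `j + 1`, then `g_n = p * x_j * q` with `p` and `q` determined by the other blocks, so
`g_n` hits any given `g` with probability at most `1 / #B_{2^j}`, and `n / 4 < 2^j`.
The independent uniform draws are realised by the Haar probability measure on
`Π j, ZMod #B_{2^j}`: translating the `j`-th coordinate preserves it, and the translates of
`{g_n = g}` along that coordinate are pairwise disjoint.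
-/

open scoped Pointwise

theorem measure_le_inv_card_of_disjoint_translates {Ω : Type*} [AddGroup Ω] [MeasurableSpace Ω]
    [MeasurableAdd Ω] (μ : Measure Ω) [IsProbabilityMeasure μ] [μ.IsAddLeftInvariant]
    {ι : Type*} [Fintype ι] (v : ι → Ω) {E : Set Ω}
    (hE : MeasurableSet E) (hv : ∀ x i j, v i + x ∈ E → v j + x ∈ E → i = j) :
    μ E ≤ (Fintype.card ι : ℝ≥0∞)⁻¹ := by
  have hdisj : Pairwise (Function.onFun Disjoint fun i => (v i + ·) ⁻¹' E) := fun i j hij =>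
    Set.disjoint_left.2 fun x hi hj => hij (hv x i j hi hj)
  have hmeas : ∀ i, MeasurableSet ((v i + ·) ⁻¹' E) := fun i => measurable_const_add (v i) hE
  rw [ENNReal.le_inv_iff_mul_le, mul_comm]
  calc (Fintype.card ι : ℝ≥0∞) * μ E = ∑ i, μ ((v i + ·) ⁻¹' E) := by
        simp [measure_preimage_add]
    _ = μ (⋃ i, (v i + ·) ⁻¹' E) := by rw [measure_iUnion hdisj hmeas, tsum_fintype]
    _ ≤ 1 := prob_le_one

section UniformPi

variable {ι : Type*} [Countable ι] (N : ι → ℕ) [∀ i, NeZero (N i)]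

noncomputable def uniformPi : Measure (Π i, ZMod (N i)) := Measure.addHaarMeasure ⊤

instance : IsProbabilityMeasure (uniformPi N) :=
  ⟨Measure.addHaarMeasure_self (K₀ := ⊤)⟩

instance : (uniformPi N).IsAddLeftInvariant := by
  unfold uniformPi; infer_instance

theorem uniformPi_le_inv_of_coord_determined [DecidableEq ι] (j : ι)
    {E : Set (Π i, ZMod (N i))} (hE : MeasurableSet E)
    (hEj : ∀ x ∈ E, ∀ y ∈ E, (∀ i ≠ j, x i = y i) → x j = y j) :
    uniformPi N E ≤ (N j : ℝ≥0∞)⁻¹ := by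
  simpa using measure_le_inv_card_of_disjoint_translates (uniformPi N) (Pi.single j) hE
    fun x a b ha hb => by simpa using hEj _ ha _ hb fun i hi => by simp [hi]

end UniformPi

section LeftProd

theorem leftProd_add (ω : ℕ → G) (a b : ℕ) :
    leftProd ω (a + b) = leftProd (fun i => ω (a + i)) b * leftProd ω a := by
  induction b with
  | zero => simp [leftProd]
  | succ b ih => rw [← add_assoc, leftProd, leftProd, ih, mul_assoc]

theorem leftProd_congr {ω ω' : ℕ → G} {n : ℕ} (h : ∀ i < n, ω i = ω' i) :
    leftProd ω n = leftProd ω' n := by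
  induction n with
  | zero => rfl
  | succ n ih =>
    rw [leftProd, leftProd, h n n.lt_succ_self, ih fun i hi => h i (by omega)]

theorem leftProd_getD (l : List G) (n : ℕ) :
    leftProd (fun i => l.getD i 1) n = (l.take n).reverse.prod := by
  induction n with
  | zero => simp [leftProd]
  | succ n ih =>
    rw [leftProd, ih, List.take_add_one, List.reverse_append, List.prod_append,
      List.getD_eq_getElem?_getD]
    cases l[n]? <;> simp

theorem leftProd_mem_pow {ω : ℕ → G} {s : Set G} (hω : ∀ i, ω i ∈ s) (n : ℕ) :
    leftProd ω n ∈ s ^ n := by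
  induction n with
  | zero => exact Set.one_mem_one
  | succ n ih => rw [pow_succ']; exact Set.mul_mem_mul (hω n) ih

theorem measurable_leftProd [MeasurableSpace G] [MeasurableMul₂ G] (n : ℕ) :
    Measurable fun ω : ℕ → G => leftProd ω n := by
  induction n with
  | zero => exact measurable_const
  | succ n ih => exact (measurable_pi_apply n).mul ih

end LeftProd

section WordBall

theorem mem_symmGens [DecidableEq G] {S : Finset G} {x : G} :
    x ∈ symmGens S ↔ x = 1 ∨ x ∈ S ∨ x⁻¹ ∈ S := by
  simp [symmGens, inv_eq_iff_eq_inv]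

theorem exists_leftProd_eq_of_mem_wordBall [DecidableEq G] {S : Finset G} {m : ℕ} {g : G}
    (hg : g ∈ wordBall S m) :
    ∃ ω : ℕ → G, (∀ i, ω i ∈ symmGens S) ∧ leftProd ω m = g := by
  obtain ⟨l, hlen, hl, rfl⟩ := hg
  refine ⟨fun i => l.reverse.getD i 1, fun i => ?_, ?_⟩
  · simp only [List.getD_eq_getElem?_getD]
    cases h : l.reverse[i]? with
    | none => exact mem_symmGens.2 (Or.inl rfl)
    | some x =>
      exact mem_symmGens.2 (Or.inr (hl x (List.mem_reverse.1 (List.mem_of_getElem? h))))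
  · rw [leftProd_getD, List.take_of_length_le (by simpa using hlen), List.reverse_reverse]

theorem wordBall_subset_pow [DecidableEq G] (S : Finset G) (m : ℕ) :
    wordBall S m ⊆ (symmGens S : Set G) ^ m := fun _ hg =>
  let ⟨_, hω, hprod⟩ := exists_leftProd_eq_of_mem_wordBall hg
  hprod ▸ leftProd_mem_pow hω m

theorem wordBall_finite (S : Finset G) (m : ℕ) : (wordBall S m).Finite := by
  classical
  refine (symmGens S ^ m).finite_toSet.subset ?_
  rw [Finset.coe_pow]
  exact wordBall_subset_pow S m

instance (S : Finset G) (m : ℕ) : Finite (wordBall S m) := (wordBall_finite S m).to_subtype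

theorem one_mem_wordBall (S : Finset G) (m : ℕ) : (1 : G) ∈ wordBall S m :=
  ⟨[], by simp, by simp, rfl⟩

theorem wordBall_mono (S : Finset G) {m n : ℕ} (h : m ≤ n) : wordBall S m ⊆ wordBall S n :=
  fun _ ⟨l, hl, hmem, hprod⟩ => ⟨l, hl.trans h, hmem, hprod⟩

theorem countable_of_closure_eq_top {s : Set G} (hs : s.Countable)
    (h : Subgroup.closure s = ⊤) : Countable G := by
  have := hs.to_subtype
  refine (FreeGroup.lift_surjective_iff_closure_range_eq_top (f := ((↑) : s → G))).2 ?_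
    |>.countable
  rwa [Subtype.range_coe]

end WordBall

section BlockSchedule

def blockStart (j : ℕ) : ℕ := 2 ^ j - 1

def blockIndex (n : ℕ) : ℕ := Nat.log 2 (n + 1)

theorem blockStart_succ (j : ℕ) : blockStart (j + 1) = blockStart j + 2 ^ j := by
  have := j.one_le_two_pow
  rw [blockStart, blockStart, pow_succ]
  omega

theorem blockIndex_blockStart_add {j i : ℕ} (hi : i < 2 ^ j) :
    blockIndex (blockStart j + i) = j := by
  have := j.one_le_two_pow
  have := pow_succ 2 j
  unfold blockIndex blockStart
  exact Nat.log_eq_of_pow_le_of_lt_pow (by omega) (by omega)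

theorem blockStart_blockIndex_le (n : ℕ) : blockStart (blockIndex n) ≤ n := by
  have := Nat.pow_log_le_self 2 (Nat.add_one_ne_zero n)
  rw [blockStart, blockIndex]
  omega

theorem lt_blockStart_blockIndex_succ (n : ℕ) : n < blockStart (blockIndex n + 1) := by
  have := Nat.lt_pow_succ_log_self one_lt_two (n + 1)
  rw [blockStart, blockIndex]
  omega

theorem blockIndex_pos {n : ℕ} (hn : 1 ≤ n) : 0 < blockIndex n :=
  Nat.log_pos one_lt_two (by omega)

theorem div_four_lt_of_blockIndex_eq_succ {n j : ℕ} (h : blockIndex n = j + 1) :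
    n / 4 < 2 ^ j := by
  have := lt_blockStart_blockIndex_succ n
  rw [h, blockStart, pow_succ, pow_succ] at this
  omega

end BlockSchedule

section BlockLetters

variable [DecidableEq G] (S : Finset G)

noncomputable def spelling {m : ℕ} (g : wordBall S m) : ℕ → G :=
  (exists_leftProd_eq_of_mem_wordBall g.2).choose

theorem spelling_mem {m : ℕ} (g : wordBall S m) (i : ℕ) : spelling S g i ∈ symmGens S :=
  (exists_leftProd_eq_of_mem_wordBall g.2).choose_spec.1 i

theorem leftProd_spelling {m : ℕ} (g : wordBall S m) : leftProd (spelling S g) m = g :=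
  (exists_leftProd_eq_of_mem_wordBall g.2).choose_spec.2

noncomputable def ballCard (j : ℕ) : ℕ := Nat.card (wordBall S (2 ^ j))

instance (j : ℕ) : NeZero (ballCard S j) :=
  ⟨Nat.card_ne_zero.2 ⟨⟨⟨1, one_mem_wordBall S _⟩⟩, inferInstance⟩⟩

noncomputable def ballEquiv (j : ℕ) : ZMod (ballCard S j) ≃ wordBall S (2 ^ j) :=
  (ZMod.finEquiv _).symm.toEquiv.trans (Finite.equivFin _).symm

noncomputable def blockLetters (h : Π j, ZMod (ballCard S j)) (n : ℕ) : G :=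
  spelling S (ballEquiv S (blockIndex n) (h (blockIndex n))) (n - blockStart (blockIndex n))

theorem blockLetters_mem (h : Π j, ZMod (ballCard S j)) (n : ℕ) :
    blockLetters S h n ∈ symmGens S :=
  spelling_mem S _ _

theorem measurable_blockLetters [MeasurableSpace G] : Measurable (blockLetters S) :=
  measurable_pi_lambda _ fun n =>
    (Measurable.of_discrete (f := fun z => spelling S (ballEquiv S (blockIndex n) z)
      (n - blockStart (blockIndex n)))).comp (measurable_pi_apply (blockIndex n))

theorem leftProd_blockLetters_blockStart_add (h : Π j, ZMod (ballCard S j)) {j s : ℕ}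
    (hs : s ≤ 2 ^ j) :
    leftProd (blockLetters S h) (blockStart j + s) =
      leftProd (spelling S (ballEquiv S j (h j))) s *
        leftProd (blockLetters S h) (blockStart j) := by
  rw [leftProd_add]
  congr 1
  refine leftProd_congr fun i hi => ?_
  rw [blockLetters, blockIndex_blockStart_add (hi.trans_le hs), Nat.add_sub_cancel_left]

theorem leftProd_blockLetters_blockStart_succ (h : Π j, ZMod (ballCard S j)) (j : ℕ) :
    leftProd (blockLetters S h) (blockStart (j + 1)) =
      ballEquiv S j (h j) * leftProd (blockLetters S h) (blockStart j) := by
  rw [blockStart_succ, leftProd_blockLetters_blockStart_add S h le_rfl, leftProd_spelling]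

theorem leftProd_blockLetters_blockStart_congr {h h' : Π j, ZMod (ballCard S j)} {j : ℕ}
    (hh' : ∀ i < j, h i = h' i) :
    leftProd (blockLetters S h) (blockStart j) = leftProd (blockLetters S h') (blockStart j) := by
  induction j with
  | zero => rfl
  | succ j ih =>
    rw [leftProd_blockLetters_blockStart_succ, leftProd_blockLetters_blockStart_succ,
      hh' j j.lt_succ_self, ih fun i hi => hh' i (by omega)]

theorem eq_of_leftProd_blockLetters_eq {h h' : Π j, ZMod (ballCard S j)} {n j : ℕ}
    (hn : blockIndex n = j + 1) (hh' : ∀ i ≠ j, h i = h' i)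
    (heq : leftProd (blockLetters S h) n = leftProd (blockLetters S h') n) : h j = h' j := by
  obtain ⟨s, rfl⟩ := Nat.exists_eq_add_of_le (hn ▸ blockStart_blockIndex_le n)
  have hs : s ≤ 2 ^ (j + 1) := by
    have := lt_blockStart_blockIndex_succ (blockStart (j + 1) + s)
    rw [hn, blockStart_succ (j + 1)] at this
    omega
  rw [leftProd_blockLetters_blockStart_add S h hs, leftProd_blockLetters_blockStart_add S h' hs,
    leftProd_blockLetters_blockStart_succ, leftProd_blockLetters_blockStart_succ,
    leftProd_blockLetters_blockStart_congr S fun i hi => hh' i hi.ne, hh' (j + 1) (by omega)] at heq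
  exact (ballEquiv S j).injective (Subtype.ext (by simpa using heq))

end BlockLetters

/-- **Existence of the spreading random process.** For any finitely generated group `G`
with symmetrized generating set `F = S ∪ S⁻¹ ∪ {1}`, there is a probability measure on
sequences with values in `F` such that the left partial products `g_n` satisfy
`P(g_n = g) ≤ 1/#B_{⌊n/4⌋}(e)` for all `n ≥ 1` and `g ∈ G`. -/
theorem random_process_exists
    {G : Type*} [Group G] [DecidableEq G] [mG : MeasurableSpace G] (hmG : mG = ⊤)
    (S : Finset G) (hS : Subgroup.closure (S : Set G) = ⊤)
    (F : Finset G) (hF : F = symmGens S) :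
    ∃ μ : Measure (ℕ → G), IsProbabilityMeasure μ ∧
      μ {ω : ℕ → G | ∀ n : ℕ, ω n ∈ (F : Set G)} = 1 ∧
      ∀ n : ℕ, 1 ≤ n → ∀ g : G,
        μ {ω : ℕ → G | leftProd ω n = g} ≤ (((wordBall S (n / 4)).ncard : ℝ≥0∞))⁻¹ := by
  subst hF
  have : DiscreteMeasurableSpace G := ⟨fun s => hmG ▸ MeasurableSpace.measurableSet_top⟩
  have : Countable G := countable_of_closure_eq_top S.countable_toSet hS
  have hL := measurable_blockLetters S
  refine ⟨(uniformPi (ballCard S)).map (blockLetters S),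
    Measure.isProbabilityMeasure_map hL.aemeasurable, ?_, fun n hn g => ?_⟩
  · have hF : MeasurableSet {ω : ℕ → G | ∀ n, ω n ∈ (symmGens S : Set G)} := by
      rw [Set.ofPred_forall]
      exact .iInter fun n => measurable_pi_apply n .of_discrete
    rw [Measure.map_apply hL hF]
    simp [blockLetters_mem]
  · obtain ⟨j, hj⟩ := Nat.exists_eq_add_one.2 (blockIndex_pos hn)
    calc (uniformPi (ballCard S)).map (blockLetters S) {ω | leftProd ω n = g}
        = uniformPi (ballCard S) {h | leftProd (blockLetters S h) n = g} :=
          Measure.map_apply hL (measurable_leftProd n (measurableSet_singleton g))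
      _ ≤ (ballCard S j : ℝ≥0∞)⁻¹ :=
          uniformPi_le_inv_of_coord_determined _ j
            ((measurable_leftProd n).comp hL (measurableSet_singleton g))
            fun h hh h' hh' hhh' => eq_of_leftProd_blockLetters_eq S hj hhh' (hh.trans hh'.symm)
      _ ≤ ((wordBall S (n / 4)).ncard : ℝ≥0∞)⁻¹ := by
          rw [ENNReal.inv_le_inv, ballCard, Nat.card_coe_set_eq, Nat.cast_le]
          exact Set.ncard_le_ncard (wordBall_mono S (div_four_lt_of_blockIndex_eq_succ hj).le)
            (wordBall_finite S _)

end NilpotentCritReg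
end

section
/- Let G be a group with a fixed finite generating set and H ≤ G a subgroup. Then for every n ≥ 0 the following inequalities hold: #B_{2n}^G(e) ≥ #B_n^{G/H} · #(B_n^G(e) ∩ H) and #B_n^G(e) ≤ #B_n^{G/H} · #(B_{2n}^G(e) ∩ H). -/
open Filter Set Topology MeasureTheory
open scoped ENNReal

namespace NilpotentCritReg

variable {G : Type*} [Group G]

/-! The first inequality injects `(coset, h) ↦ r(coset) * h` into `B_{2n}`, where `r` picks a
representative of each coset in `B_n`; the second injects `g ↦ (gH, r(gH)⁻¹ g)` into
`B_n^{G/H} × (B_{2n} ∩ H)`. -/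

open scoped Pointwise

section WordBall

variable {S : Finset G} {m n : ℕ} {a b : G}

lemma mul_mem_wordBall (ha : a ∈ wordBall S m) (hb : b ∈ wordBall S n) :
    a * b ∈ wordBall S (m + n) := by
  obtain ⟨l₁, hl₁, hS₁, rfl⟩ := ha
  obtain ⟨l₂, hl₂, hS₂, rfl⟩ := hb
  refine ⟨l₁ ++ l₂, by simpa using Nat.add_le_add hl₁ hl₂, ?_, List.prod_append⟩
  simpa only [List.mem_append, or_imp, forall_and] using ⟨hS₁, hS₂⟩

lemma inv_mem_wordBall (ha : a ∈ wordBall S n) : a⁻¹ ∈ wordBall S n := by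
  obtain ⟨l, hl, hS, rfl⟩ := ha
  refine ⟨(l.map (·⁻¹)).reverse, by simpa using hl, ?_, (List.prod_inv_reverse l).symm⟩
  simp only [List.mem_reverse, List.mem_map, forall_exists_index, and_imp]
  rintro _ x hx rfl
  simpa [or_comm] using hS x hx

lemma wordBall_mul_subset : wordBall S m * wordBall S n ⊆ wordBall S (m + n) :=
  Set.mul_subset_iff.2 fun _ ha _ hb => mul_mem_wordBall ha hb

lemma inv_wordBall_subset : (wordBall S n)⁻¹ ⊆ wordBall S n :=
  fun a ha => inv_inv a ▸ inv_mem_wordBall ha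

lemma wordBall_succ_subset :
    wordBall S (n + 1) ⊆ wordBall S n ∪ ((S : Set G) ∪ (S : Set G)⁻¹) * wordBall S n := by
  rintro _ ⟨l, hl, hS, rfl⟩
  cases l with
  | nil => exact Or.inl ⟨[], Nat.zero_le n, by simp, rfl⟩
  | cons x t =>
    refine Or.inr (Set.mul_mem_mul (hS x List.mem_cons_self) ⟨t, ?_, ?_, rfl⟩)
    · simpa using hl
    · exact fun y hy => hS y (List.mem_cons_of_mem x hy)

lemma finite_wordBall (S : Finset G) (n : ℕ) : (wordBall S n).Finite := by
  induction n with
  | zero =>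
    refine (Set.finite_singleton 1).subset ?_
    rintro _ ⟨l, hl, -, rfl⟩
    simp [List.length_eq_zero_iff.1 (Nat.le_zero.1 hl)]
  | succ n ih =>
    exact (ih.union ((S.finite_toSet.union S.finite_toSet.inv).mul ih)).subset
      wordBall_succ_subset

end WordBall

section CosetCounting

variable {H : Subgroup G} {A K : Set G}

lemma ncard_image_mk_mul_ncard_le (hK : K ⊆ H) (hAK : (A * K).Finite) :
    (QuotientGroup.mk '' A : Set (G ⧸ H)).ncard * K.ncard ≤ (A * K).ncard := by
  set r := Function.invFunOn (QuotientGroup.mk : G → G ⧸ H) A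
  have hr : ∀ q ∈ (QuotientGroup.mk '' A : Set (G ⧸ H)), r q ∈ A ∧ (r q : G ⧸ H) = q :=
    fun q hq => Function.invFunOn_pos hq
  rw [← Set.ncard_prod]
  refine Set.ncard_le_ncard_of_injOn (fun p => r p.1 * p.2)
    (fun p hp => Set.mul_mem_mul (hr _ hp.1).1 hp.2) ?_ hAK
  rintro ⟨q₁, k₁⟩ ⟨hq₁, hk₁⟩ ⟨q₂, k₂⟩ ⟨hq₂, hk₂⟩ (heq : r q₁ * k₁ = r q₂ * k₂)
  have hq : q₁ = q₂ := calc
    q₁ = ((r q₁ * k₁ : G) : G ⧸ H) := by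
      rw [QuotientGroup.mk_mul_of_mem _ (hK hk₁), (hr q₁ hq₁).2]
    _ = ((r q₂ * k₂ : G) : G ⧸ H) := by rw [heq]
    _ = q₂ := by
      rw [QuotientGroup.mk_mul_of_mem _ (hK hk₂), (hr q₂ hq₂).2]
  subst hq
  rw [mul_left_cancel heq]

lemma ncard_le_ncard_image_mk_mul_ncard (hA : A.Finite) :
    A.ncard ≤ (QuotientGroup.mk '' A : Set (G ⧸ H)).ncard * (A⁻¹ * A ∩ (H : Set G)).ncard := by
  set r := Function.invFunOn (QuotientGroup.mk : G → G ⧸ H) A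
  have hr : ∀ g ∈ A, r g ∈ A ∧ (r g : G ⧸ H) = g :=
    fun g hg => Function.invFunOn_pos ⟨g, hg, rfl⟩
  rw [← Set.ncard_prod]
  refine Set.ncard_le_ncard_of_injOn (fun g => ((g : G ⧸ H), (r g)⁻¹ * g))
    (fun g hg => ⟨Set.mem_image_of_mem _ hg,
      Set.mul_mem_mul (Set.inv_mem_inv.2 (hr g hg).1) hg, QuotientGroup.eq.1 (hr g hg).2⟩) ?_
    ((hA.image _).prod ((hA.inv.mul hA).inter_of_left _))
  intro g₁ _ g₂ _ heq
  obtain ⟨hq, hk⟩ := Prod.mk.inj heq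
  rw [hq] at hk
  exact mul_left_cancel hk

end CosetCounting

theorem ball_counting_inequalities_general
    {G : Type*} [Group G]
    (S : Finset G)
    (H : Subgroup G) (n : ℕ) :
    (schreierBall S H n).ncard * (wordBall S n ∩ (H : Set G)).ncard
        ≤ (wordBall S (2 * n)).ncard ∧
    (wordBall S n).ncard
        ≤ (schreierBall S H n).ncard * (wordBall S (2 * n) ∩ (H : Set G)).ncard := by
  have hball : ∀ k, (wordBall S k).Finite := finite_wordBall S
  have hsum : wordBall S n * wordBall S n ⊆ wordBall S (2 * n) :=
    two_mul n ▸ wordBall_mul_subset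
  constructor
  · calc (schreierBall S H n).ncard * (wordBall S n ∩ (H : Set G)).ncard
        ≤ (wordBall S n * (wordBall S n ∩ (H : Set G))).ncard :=
          ncard_image_mk_mul_ncard_le Set.inter_subset_right
            ((hball n).mul ((hball n).inter_of_left _))
      _ ≤ (wordBall S (2 * n)).ncard :=
          Set.ncard_le_ncard ((Set.mul_subset_mul_left Set.inter_subset_left).trans hsum)
            (hball _)
  · calc (wordBall S n).ncard
        ≤ (schreierBall S H n).ncard *
            ((wordBall S n)⁻¹ * wordBall S n ∩ (H : Set G)).ncard :=
          ncard_le_ncard_image_mk_mul_ncard (hball n)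
      _ ≤ (schreierBall S H n).ncard * (wordBall S (2 * n) ∩ (H : Set G)).ncard := by
          gcongr
          · exact (hball _).inter_of_left _
          · exact (Set.mul_subset_mul_right inv_wordBall_subset).trans hsum

/-- **Ball counting inequalities.** For any subgroup `H` of a group `G` with a fixed
finite generating set: `#B_{2n}^G(e) ≥ #B_n^{G/H} · #(B_n^G(e) ∩ H)` and
`#B_n^G(e) ≤ #B_n^{G/H} · #(B_{2n}^G(e) ∩ H)`. -/
theorem ball_counting_inequalities
    {G : Type*} [Group G]
    (S : Finset G) (hS : Subgroup.closure (S : Set G) = ⊤)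
    (H : Subgroup G) (n : ℕ) :
    (schreierBall S H n).ncard * (wordBall S n ∩ (H : Set G)).ncard
        ≤ (wordBall S (2 * n)).ncard ∧
    (wordBall S n).ncard
        ≤ (schreierBall S H n).ncard * (wordBall S (2 * n) ∩ (H : Set G)).ncard :=
  ball_counting_inequalities_general S H n

end NilpotentCritReg
end

section
/- (Polterovich–Sodin.) Let J = [a,b] be a nondegenerate compact interval and let g : J → J be an orientation-preserving C¹ diffeomorphism with g ≠ id. Then the sup-norm of the derivative of the iterates of g cannot grow sublinearly: it is not the case that sup_{x∈J} (g^m)'(x) = o(m) as m → ∞; equivalently, limsup_{m→∞} (1/m)·sup_{x∈J} (g^m)'(x) > 0. -/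
/-! Take `x₀` with `g x₀ ≠ x₀` and its backward orbit `yₙ = g⁻ⁿ x₀`. As `g` is increasing, the
orbit is monotone in `[a, b]`, so the gaps `|yₙ₊₁ - yₙ|` are summable. But `gⁿ⁺¹` maps the gap
between `yₙ` and `yₙ₊₁` onto the fixed interval between `x₀` and `g x₀`, so by the mean value
theorem `sup (gⁿ⁺¹)' ≥ |g x₀ - x₀| / |yₙ₊₁ - yₙ|`. If this supremum were `o(n)`, the gaps would
eventually exceed `|g x₀ - x₀| / (n + 1)`, and the harmonic series would converge. -/

open Filter Set Topology MeasureTheory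
open scoped ENNReal

theorem Set.SurjOn.exists_backward_orbit {α : Type*} {g : α → α} {s : Set α} {x : α}
    (hg : SurjOn g s s) (hx : x ∈ s) :
    ∃ y : ℕ → α, y 0 = x ∧ (∀ n, y n ∈ s) ∧ ∀ n, g (y (n + 1)) = y n := by
  have hpre : ∀ t ∈ s, ∃ u ∈ s, g u = t := hg
  choose! h hmem hgh using hpre
  have hy (n : ℕ) : h^[n] x ∈ s := MapsTo.iterate hmem n hx
  refine ⟨fun n => h^[n] x, rfl, hy, fun n => ?_⟩
  simp only [Function.iterate_succ_apply']
  exact hgh _ (hy n)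

theorem iterate_apply_eq_of_map_succ {α : Type*} {g : α → α} {y : ℕ → α}
    (hgy : ∀ n, g (y (n + 1)) = y n) (n : ℕ) : g^[n] (y n) = y 0 := by
  induction n with
  | zero => rfl
  | succ n ih => rw [Function.iterate_succ_apply, hgy, ih]

theorem StrictMonoOn.monotone_or_antitone_of_map_succ {α : Type*} [LinearOrder α]
    {g : α → α} {s : Set α} {y : ℕ → α} (hg : StrictMonoOn g s) (hy : ∀ n, y n ∈ s)
    (hgy : ∀ n, g (y (n + 1)) = y n) : Monotone y ∨ Antitone y := by
  have mono_step (n : ℕ) (h : y n ≤ y (n + 1)) : y (n + 1) ≤ y (n + 2) :=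
    (hg.le_iff_le (hy _) (hy _)).1 (by rwa [hgy, hgy])
  have anti_step (n : ℕ) (h : y (n + 1) ≤ y n) : y (n + 2) ≤ y (n + 1) :=
    (hg.le_iff_le (hy _) (hy _)).1 (by rwa [hgy, hgy])
  rcases le_total (y 0) (y 1) with h | h
  · exact .inl <| monotone_nat_of_le_succ fun n => Nat.rec h (fun n ih => mono_step n ih) n
  · exact .inr <| antitone_nat_of_succ_le fun n => Nat.rec h (fun n ih => anti_step n ih) n

theorem StrictMonoOn.iterate {α : Type*} [Preorder α] {f : α → α} {s : Set α}
    (hf : StrictMonoOn f s) (hmaps : MapsTo f s s) (n : ℕ) : StrictMonoOn f^[n] s := by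
  induction n with
  | zero => exact strictMonoOn_id
  | succ n ih => rw [Function.iterate_succ']; exact hf.comp ih (hmaps.iterate n)

theorem Monotone.summable_sub_succ {y : ℕ → ℝ} {c : ℝ} (hy : Monotone y) (hc : ∀ n, y n ≤ c) :
    Summable fun n => y (n + 1) - y n := by
  refine summable_of_sum_range_le (c := c - y 0) (fun n => sub_nonneg.2 (hy n.le_succ)) fun n => ?_
  rw [Finset.sum_range_sub (fun n => y n)]
  linarith [hc n]

theorem summable_abs_sub_succ_of_mem_Icc {y : ℕ → ℝ} {a b : ℝ} (hy : Monotone y ∨ Antitone y)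
    (hmem : ∀ n, y n ∈ Icc a b) : Summable fun n => |y (n + 1) - y n| := by
  rcases hy with hy | hy
  · refine (hy.summable_sub_succ fun n => (hmem n).2).congr fun n => ?_
    exact (abs_of_nonneg (sub_nonneg.2 (hy n.le_succ))).symm
  · refine (hy.neg.summable_sub_succ fun n => neg_le_neg (hmem n).1).congr fun n => ?_
    rw [abs_sub_comm, abs_of_nonneg (sub_nonneg.2 (hy n.le_succ))]
    ring

theorem Real.not_summable_of_div_succ_le {s : ℕ → ℝ} {δ : ℝ} (hδ : 0 < δ)
    (hs : ∀ᶠ n in atTop, δ / (n + 1) ≤ s n) : ¬ Summable s := by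
  intro hsum
  have : Summable fun n : ℕ => δ / (n + 1 : ℝ) := by
    refine hsum.of_norm_bounded_eventually_nat ?_
    filter_upwards [hs] with n hn
    rwa [Real.norm_of_nonneg (by positivity)]
  refine Real.not_summable_one_div_natCast ((summable_nat_add_iff 1).mp ?_)
  simpa [div_eq_mul_inv, summable_mul_left_iff hδ.ne'] using this

theorem not_tendsto_div_natCast_zero_of_summable {F s : ℕ → ℝ} {δ : ℝ} (hδ : 0 < δ)
    (hs : Summable s) (hs_pos : ∀ n, 0 < s n) (hF : ∀ n, δ / s n ≤ F (n + 1)) :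
    ¬ Tendsto (fun m : ℕ => F m / m) atTop (𝓝 0) := by
  refine fun hlim => Real.not_summable_of_div_succ_le hδ ?_ hs
  filter_upwards [(tendsto_add_atTop_nat 1).eventually (hlim.eventually_lt_const one_pos)]
    with n hn
  have hn1 : (0 : ℝ) < n + 1 := by positivity
  have hF_lt : F (n + 1) < n + 1 := by
    rw [div_lt_one (by exact_mod_cast n.succ_pos)] at hn; exact_mod_cast hn
  rw [div_le_iff₀ hn1, mul_comm, ← div_le_iff₀ (hs_pos n)]
  exact (hF n).trans hF_lt.le

theorem exists_continuousOn_hasDerivWithinAt_iterate {𝕜 : Type*} [NontriviallyNormedField 𝕜]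
    {g d : 𝕜 → 𝕜} {s : Set 𝕜} (hmaps : MapsTo g s s) (hd : ContinuousOn d s)
    (hg : ∀ x ∈ s, HasDerivWithinAt g (d x) s x) (n : ℕ) :
    ∃ D : 𝕜 → 𝕜, ContinuousOn D s ∧ ∀ x ∈ s, HasDerivWithinAt (g^[n]) (D x) s x := by
  induction n with
  | zero => exact ⟨fun _ => 1, continuousOn_const, fun x _ => hasDerivWithinAt_id x s⟩
  | succ n ih =>
    obtain ⟨D, hDc, hD⟩ := ih
    have hmapsn : MapsTo (g^[n]) s s := hmaps.iterate n
    have hcont : ContinuousOn (g^[n]) s := fun x hx => (hD x hx).continuousWithinAt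
    refine ⟨fun x => d (g^[n] x) * D x, (hd.comp hcont hmapsn).mul hDc, fun x hx => ?_⟩
    rw [Function.iterate_succ']
    exact (hg _ (hmapsn hx)).comp x (hD x hx) hmapsn

theorem slope_le_sSup_derivWithin_Icc {f f' : ℝ → ℝ} {a b u v : ℝ}
    (hf : ∀ x ∈ Icc a b, HasDerivWithinAt f (f' x) (Icc a b) x) (hf' : ContinuousOn f' (Icc a b))
    (hu : u ∈ Icc a b) (hv : v ∈ Icc a b) (huv : u ≠ v) :
    slope f u v ≤ sSup (derivWithin f (Icc a b) '' Icc a b) := by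
  wlog hlt : u < v generalizing u v
  · rw [slope_comm]; exact this hv hu huv.symm (huv.lt_or_gt.resolve_left hlt)
  have hab : a < b := hu.1.trans_lt (hlt.trans_le hv.2)
  have hderiv : EqOn (derivWithin f (Icc a b)) f' (Icc a b) := fun x hx =>
    (hf x hx).derivWithin (uniqueDiffOn_Icc hab x hx)
  have huv_sub : Icc u v ⊆ Icc a b := Icc_subset_Icc hu.1 hv.2
  obtain ⟨ξ, hξ, hξ_eq⟩ := exists_hasDerivAt_eq_slope f f' hlt
    (fun x hx => (hf x (huv_sub hx)).continuousWithinAt.mono huv_sub)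
    (fun x hx => (hf x (huv_sub (Ioo_subset_Icc_self hx))).hasDerivAt
      (Icc_mem_nhds (hu.1.trans_lt hx.1) (hx.2.trans_le hv.2)))
  have hξ_mem : ξ ∈ Icc a b := huv_sub (Ioo_subset_Icc_self hξ)
  rw [image_congr hderiv, slope_def_field, ← hξ_eq]
  exact le_csSup (isCompact_Icc.image_of_continuousOn hf').bddAbove (mem_image_of_mem f' hξ_mem)

namespace NilpotentCritReg

theorem polterovich_sodin_general
    (a b : ℝ) (g : ℝ → ℝ)
    (hbij : Set.BijOn g (Set.Icc a b) (Set.Icc a b))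
    (hmono : StrictMonoOn g (Set.Icc a b))
    (d : ℝ → ℝ) (hd : ContinuousOn d (Set.Icc a b))
    (hC1 : ∀ x ∈ Set.Icc a b, 0 < d x ∧ HasDerivWithinAt g (d x) (Set.Icc a b) x)
    (hne : ¬ Set.EqOn g id (Set.Icc a b)) :
    ¬ Tendsto (fun m : ℕ =>
        sSup ((fun x => derivWithin (g^[m]) (Set.Icc a b) x) '' Set.Icc a b) / (m : ℝ))
      atTop (𝓝 0) := by
  obtain ⟨x₀, hx₀, hgx₀⟩ : ∃ x ∈ Icc a b, g x ≠ x := by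
    by_contra! h
    exact hne fun x hx => h x hx
  obtain ⟨y, rfl, hy, hgy⟩ := hbij.surjOn.exists_backward_orbit hx₀
  have horbit := iterate_apply_eq_of_map_succ hgy
  have horbit_succ (n : ℕ) : g^[n + 1] (y n) = g (y 0) := by
    rw [Function.iterate_succ_apply', horbit]
  have hgap (n : ℕ) : y (n + 1) ≠ y n := fun h =>
    hgx₀ (by rw [← horbit_succ n, ← h, horbit])
  refine not_tendsto_div_natCast_zero_of_summable (abs_pos.2 (sub_ne_zero.2 hgx₀))
    (summable_abs_sub_succ_of_mem_Icc (hmono.monotone_or_antitone_of_map_succ hy hgy) hy)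
    (fun n => abs_pos.2 (sub_ne_zero.2 (hgap n))) fun n => ?_
  obtain ⟨D, hDc, hD⟩ := exists_continuousOn_hasDerivWithinAt_iterate hbij.mapsTo hd
    (fun x hx => (hC1 x hx).2) (n + 1)
  calc |g (y 0) - y 0| / |y (n + 1) - y n| = slope g^[n + 1] (y n) (y (n + 1)) := by
        rw [← abs_of_pos ((hmono.iterate hbij.mapsTo (n + 1)).slope_pos (hy n) (hy (n + 1))
          (hgap n).symm), slope_def_field, horbit, horbit_succ, abs_div, abs_sub_comm]
    _ ≤ _ := slope_le_sSup_derivWithin_Icc hD hDc (hy n) (hy (n + 1)) (hgap n).symm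

/-- **Polterovich–Sodin.** For a `C¹` diffeomorphism `g ≠ id` of a compact interval,
the sup-norm of the derivatives of the iterates `g^m` cannot grow sublinearly, i.e.
`sup_{x} (g^m)'(x) = o(m)` is impossible. -/
theorem polterovich_sodin
    (a b : ℝ) (hab : a < b) (g : ℝ → ℝ)
    (hbij : Set.BijOn g (Set.Icc a b) (Set.Icc a b))
    (hmono : StrictMonoOn g (Set.Icc a b))
    (d : ℝ → ℝ) (hd : ContinuousOn d (Set.Icc a b))
    (hC1 : ∀ x ∈ Set.Icc a b, 0 < d x ∧ HasDerivWithinAt g (d x) (Set.Icc a b) x)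
    (hne : ¬ Set.EqOn g id (Set.Icc a b)) :
    ¬ Tendsto (fun m : ℕ =>
        sSup ((fun x => derivWithin (g^[m]) (Set.Icc a b) x) '' Set.Icc a b) / (m : ℝ))
      atTop (𝓝 0) :=
  polterovich_sodin_general a b g hbij hmono d hd hC1 hne

end NilpotentCritReg
end
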